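/- Let u be a smooth spatially periodic (period L) solution of the eBBM₁⁄₃ equation u_t − u_xxt = −u_x − u·u_x + (1/3)u·u_xxx + (2/3)u_x·u_xx, with 2(u − u_xx) + 3 > 0 everywhere. Then the functional γ̃₂[u] := ∫₀ᴸ √(2(u − u_xx) + 3) dx is conserved in time along the flow. -/

import Mathlib

open MeasureTheory

/-- Partial derivative in the first (spatial) variable. -/
noncomputable def px (f : ℝ → ℝ → ℝ) : ℝ → ℝ → ℝ := fun x t => deriv (fun y => f y t) x

/-- Partial derivative in the second (temporal) variable. -/
noncomputable def pt (f : ℝ → ℝ → ℝ) : ℝ → ℝ → ℝ := fun x t => deriv (fun s => f x s) t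

lemma hasDerivAt_fst' (f : ℝ → ℝ → ℝ) (hf : ContDiff ℝ (⊤ : ℕ∞) (fun p : ℝ × ℝ => f p.1 p.2)) (x t : ℝ) :
    HasDerivAt (fun y => f y t) (px f x t) x := by
  have hd : DifferentiableAt ℝ (fun y => f y t) x := by
    have h1 : DifferentiableAt ℝ (fun p : ℝ × ℝ => f p.1 p.2) (x, t) := hf.differentiable (by simp) _
    exact h1.comp x (f := fun y : ℝ => (y, t)) (by fun_prop)
  exact hd.hasDerivAt

lemma hasDerivAt_snd' (f : ℝ → ℝ → ℝ) (hf : ContDiff ℝ (⊤ : ℕ∞) (fun p : ℝ × ℝ => f p.1 p.2)) (x t : ℝ) :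
    HasDerivAt (fun s => f x s) (pt f x t) t := by
  have hd : DifferentiableAt ℝ (fun s => f x s) t := by
    have h1 : DifferentiableAt ℝ (fun p : ℝ × ℝ => f p.1 p.2) (x, t) := hf.differentiable (by simp) _
    exact h1.comp t (((differentiableAt_const x).prodMk differentiableAt_id))
  exact hd.hasDerivAt

lemma contDiff_px' (f : ℝ → ℝ → ℝ) (hf : ContDiff ℝ (⊤ : ℕ∞) (fun p : ℝ × ℝ => f p.1 p.2)) :
    ContDiff ℝ (⊤ : ℕ∞) (fun p : ℝ × ℝ => px f p.1 p.2) := by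
  have h1 : (fun p : ℝ × ℝ => px f p.1 p.2)
      = fun p => fderiv ℝ (fun q : ℝ × ℝ => f q.1 q.2) p (1, 0) := by
    funext p
    have h2 : HasDerivAt (fun y : ℝ => ((y, p.2) : ℝ × ℝ)) (1, 0) p.1 :=
      (hasDerivAt_id p.1).prodMk (hasDerivAt_const p.1 p.2)
    have h := ((hf.differentiable (by simp) (p.1, p.2)).hasFDerivAt).comp_hasDerivAt p.1 h2
    simpa [px, Function.comp_def] using h.deriv
  rw [h1]
  exact (ContinuousLinearMap.apply ℝ ℝ ((1 : ℝ), (0 : ℝ))).contDiff.comp (hf.fderiv_right (by simp))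

lemma contDiff_pt' (f : ℝ → ℝ → ℝ) (hf : ContDiff ℝ (⊤ : ℕ∞) (fun p : ℝ × ℝ => f p.1 p.2)) :
    ContDiff ℝ (⊤ : ℕ∞) (fun p : ℝ × ℝ => pt f p.1 p.2) := by
  have h1 : (fun p : ℝ × ℝ => pt f p.1 p.2)
      = fun p => fderiv ℝ (fun q : ℝ × ℝ => f q.1 q.2) p (0, 1) := by
    funext p
    have h2 : HasDerivAt (fun s : ℝ => ((p.1, s) : ℝ × ℝ)) (0, 1) p.2 :=
      (hasDerivAt_const p.2 p.1).prodMk (hasDerivAt_id p.2)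
    have h := ((hf.differentiable (by simp) (p.1, p.2)).hasFDerivAt).comp_hasDerivAt p.2 h2
    simpa [pt, Function.comp_def] using h.deriv
  rw [h1]
  exact (ContinuousLinearMap.apply ℝ ℝ ((0 : ℝ), (1 : ℝ))).contDiff.comp (hf.fderiv_right (by simp))

lemma px_periodic' (f : ℝ → ℝ → ℝ) (L : ℝ) (h : ∀ x t, f (x + L) t = f x t) :
    ∀ x t, px f (x + L) t = px f x t := by
  intro x t
  have h1 : (fun y => f (y + L) t) = fun y => f y t := by funext y; exact h y t
  calc px f (x + L) t = deriv (fun y => f (y + L) t) x :=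
        (deriv_comp_add_const (fun z => f z t) L x).symm
    _ = px f x t := by rw [h1]; rfl

theorem stmt10 (L : ℝ) (hL : 0 < L) (u : ℝ → ℝ → ℝ)
    (hu : ContDiff ℝ (⊤ : ℕ∞) (fun p : ℝ × ℝ => u p.1 p.2))
    (hper : ∀ x t : ℝ, u (x + L) t = u x t)
    (hpos : ∀ x t : ℝ, 0 < 2 * (u x t - px (px u) x t) + 3)
    (hpde : ∀ x t : ℝ,
      pt u x t - pt (px (px u)) x t =
        -(px u x t) - u x t * px u x t
          + (1/3) * u x t * px (px (px u)) x t
          + (2/3) * px u x t * px (px u) x t) :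
    ∀ t : ℝ,
      deriv (fun s => ∫ x in (0:ℝ)..L,
        Real.sqrt (2 * (u x s - px (px u) x s) + 3)) t = 0 := by
  intro t
  have hcu1 : ContDiff ℝ (⊤ : ℕ∞) (fun p : ℝ × ℝ => px u p.1 p.2) := contDiff_px' u hu
  have hcu2 : ContDiff ℝ (⊤ : ℕ∞) (fun p : ℝ × ℝ => px (px u) p.1 p.2) := contDiff_px' _ hcu1
  have hcu3 : ContDiff ℝ (⊤ : ℕ∞) (fun p : ℝ × ℝ => px (px (px u)) p.1 p.2) := contDiff_px' _ hcu2
  -- positivity facts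
  have hSpos : ∀ x s : ℝ, 0 < Real.sqrt (2 * (u x s - px (px u) x s) + 3) :=
    fun x s => Real.sqrt_pos.mpr (hpos x s)
  have hSne : ∀ x s : ℝ, Real.sqrt (2 * (u x s - px (px u) x s) + 3) ≠ 0 :=
    fun x s => (hSpos x s).ne'
  -- time derivative of sqrt(m)
  have hFt : ∀ x s : ℝ, HasDerivAt (fun s' => Real.sqrt (2 * (u x s' - px (px u) x s') + 3))
      ((pt u x s - pt (px (px u)) x s) / Real.sqrt (2 * (u x s - px (px u) x s) + 3)) s := by
    intro x s
    have h1 := hasDerivAt_snd' u hu x s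
    have h2 := hasDerivAt_snd' (px (px u)) hcu2 x s
    have hm : HasDerivAt (fun s' => 2 * (u x s' - px (px u) x s') + 3)
        (2 * (pt u x s - pt (px (px u)) x s)) s := ((h1.sub h2).const_mul 2).add_const 3
    have hne : 2 * (u x s - px (px u) x s) + 3 ≠ 0 := ne_of_gt (hpos x s)
    have hS0 := hSne x s
    have h3 := (Real.hasDerivAt_sqrt hne).comp s hm
    have h4 : HasDerivAt (fun s' => Real.sqrt (2 * (u x s' - px (px u) x s') + 3))
        (1 / (2 * Real.sqrt (2 * (u x s - px (px u) x s) + 3))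
          * (2 * (pt u x s - pt (px (px u)) x s))) s := h3
    have heq : 1 / (2 * Real.sqrt (2 * (u x s - px (px u) x s) + 3))
        * (2 * (pt u x s - pt (px (px u)) x s))
        = (pt u x s - pt (px (px u)) x s) / Real.sqrt (2 * (u x s - px (px u) x s) + 3) := by
      field_simp
    exact heq ▸ h4
  -- space derivative of sqrt(m)
  have hFx : ∀ x s : ℝ, HasDerivAt (fun y => Real.sqrt (2 * (u y s - px (px u) y s) + 3))
      ((px u x s - px (px (px u)) x s) / Real.sqrt (2 * (u x s - px (px u) x s) + 3)) x := by
    intro x s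
    have h1 := hasDerivAt_fst' u hu x s
    have h2 := hasDerivAt_fst' (px (px u)) hcu2 x s
    have hm : HasDerivAt (fun y => 2 * (u y s - px (px u) y s) + 3)
        (2 * (px u x s - px (px (px u)) x s)) x := ((h1.sub h2).const_mul 2).add_const 3
    have hne : 2 * (u x s - px (px u) x s) + 3 ≠ 0 := ne_of_gt (hpos x s)
    have hS0 := hSne x s
    have h3 := (Real.hasDerivAt_sqrt hne).comp x hm
    have h4 : HasDerivAt (fun y => Real.sqrt (2 * (u y s - px (px u) y s) + 3))
        (1 / (2 * Real.sqrt (2 * (u x s - px (px u) x s) + 3))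
          * (2 * (px u x s - px (px (px u)) x s))) x := h3
    have heq : 1 / (2 * Real.sqrt (2 * (u x s - px (px u) x s) + 3))
        * (2 * (px u x s - px (px (px u)) x s))
        = (px u x s - px (px (px u)) x s) / Real.sqrt (2 * (u x s - px (px u) x s) + 3) := by
      field_simp
    exact heq ▸ h4
  -- the key algebraic identity
  have key : ∀ x s : ℝ,
      (pt u x s - pt (px (px u)) x s) / Real.sqrt (2 * (u x s - px (px u) x s) + 3)
        = -(1/3) * (px u x s * Real.sqrt (2 * (u x s - px (px u) x s) + 3)
            + u x s * ((px u x s - px (px (px u)) x s)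
              / Real.sqrt (2 * (u x s - px (px u) x s) + 3))) := by
    intro x s
    have hSq : Real.sqrt (2 * (u x s - px (px u) x s) + 3)
        * Real.sqrt (2 * (u x s - px (px u) x s) + 3)
        = 2 * (u x s - px (px u) x s) + 3 := Real.mul_self_sqrt (le_of_lt (hpos x s))
    have hS0 := hSne x s
    rw [hpde x s]
    field_simp
    linear_combination (px u x s) * hSq
  -- joint continuity of the t-derivative
  have hcont : Continuous (fun p : ℝ × ℝ =>
      (pt u p.1 p.2 - pt (px (px u)) p.1 p.2)
        / Real.sqrt (2 * (u p.1 p.2 - px (px u) p.1 p.2) + 3)) := by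
    apply Continuous.div
    · exact (contDiff_pt' u hu).continuous.sub (contDiff_pt' _ hcu2).continuous
    · exact Real.continuous_sqrt.comp
        ((continuous_const.mul (hu.continuous.sub hcu2.continuous)).add continuous_const)
    · exact fun p => hSne p.1 p.2
  -- the integral of the t-derivative vanishes (FTC + periodicity)
  have hzero : (∫ x in (0:ℝ)..L,
      (pt u x t - pt (px (px u)) x t) / Real.sqrt (2 * (u x t - px (px u) x t) + 3)) = 0 := by
    have hG : ∀ x ∈ Set.uIcc (0:ℝ) L,
        HasDerivAt (fun y => -(1/3) * (u y t * Real.sqrt (2 * (u y t - px (px u) y t) + 3)))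
          ((pt u x t - pt (px (px u)) x t)
            / Real.sqrt (2 * (u x t - px (px u) x t) + 3)) x := by
      intro x _
      have h := ((hasDerivAt_fst' u hu x t).mul (hFx x t)).const_mul (-(1/3) : ℝ)
      rw [key x t]
      exact h
    have hint : IntervalIntegrable (fun x =>
        (pt u x t - pt (px (px u)) x t)
          / Real.sqrt (2 * (u x t - px (px u) x t) + 3)) MeasureTheory.volume 0 L :=
      (hcont.comp (continuous_id.prodMk continuous_const)).intervalIntegrable 0 L
    rw [intervalIntegral.integral_eq_sub_of_hasDerivAt hG hint]
    have hpu : u L t = u 0 t := by have := hper 0 t; simpa using this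
    have hpu2 : px (px u) L t = px (px u) 0 t := by
      have := px_periodic' _ L (px_periodic' u L hper) 0 t; simpa using this
    rw [hpu, hpu2]
    ring
  -- bound on a compact neighborhood
  obtain ⟨C, hC⟩ := ((isCompact_uIcc (a := (0:ℝ)) (b := L)).prod
      (isCompact_closedBall t 1)).exists_bound_of_continuousOn hcont.continuousOn
  -- differentiation under the integral sign
  have hmain := intervalIntegral.hasDerivAt_integral_of_dominated_loc_of_deriv_le
    (μ := MeasureTheory.volume)
    (F := fun s x => Real.sqrt (2 * (u x s - px (px u) x s) + 3))
    (F' := fun s x => (pt u x s - pt (px (px u)) x s)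
      / Real.sqrt (2 * (u x s - px (px u) x s) + 3))
    (x₀ := t) (bound := fun _ => C) (a := 0) (b := L) (s := Metric.ball t 1) (Metric.ball_mem_nhds t one_pos)
    (Filter.Eventually.of_forall fun s =>
      ((Real.continuous_sqrt.comp
        ((continuous_const.mul (hu.continuous.sub hcu2.continuous)).add continuous_const)).comp
        (continuous_id.prodMk continuous_const)).aestronglyMeasurable)
    (((Real.continuous_sqrt.comp
        ((continuous_const.mul (hu.continuous.sub hcu2.continuous)).add continuous_const)).comp
        (continuous_id.prodMk continuous_const)).intervalIntegrable 0 L)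
    ((hcont.comp (continuous_id.prodMk continuous_const)).aestronglyMeasurable)
    (MeasureTheory.ae_of_all _ fun x hx s hs =>
      hC (x, s) ⟨Set.uIoc_subset_uIcc hx, Metric.ball_subset_closedBall hs⟩)
    (intervalIntegrable_const)
    (MeasureTheory.ae_of_all _ fun x _ s _ => hFt x s)
  rw [hmain.2.deriv]
  exact hzero
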